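/- Let λ be a Young diagram with n boxes and column lengths μ₁ ≥ μ₂ ≥ ... ≥ μ_r. If a filling T of λ satisfies conditions (a) the first column is filled with {1,...,μ₁}, and (b) for adjacent pairs (i₁,j₁), (i₂,j₂) one has i₁ < i₂ iff j₁ < j₂, then for each 1 ≤ s ≤ r, the s-th column of T contains precisely the integers from (μ₁+...+μ_{s-1})+1 to μ₁+...+μ_s. -/

import Mathlib

/-!
Condition (b) says that passing to the left neighbour is strictly monotone on the entries outside
the first column. Hence, by induction on the column of the larger entry, a smaller entry never
lies in a later column; the base case is condition (a). So the entries of the first `s` columns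
form an initial segment of `{1, ..., n}`, which has `μ₁ + ⋯ + μ_s` elements.
-/

/-- A filling of `μ` by `{1, ..., μ.card}`. -/
def IsFilling (μ : YoungDiagram) (T : ℕ × ℕ → ℕ) : Prop :=
  Set.BijOn T (↑μ.cells) (Set.Icc 1 μ.card)

/-- `i` is directly left-adjacent to `j` in the filling `T`. -/
def Adjacent (μ : YoungDiagram) (T : ℕ × ℕ → ℕ) (i j : ℕ) : Prop :=
  ∃ r c, (r, c) ∈ μ ∧ (r, c + 1) ∈ μ ∧ T (r, c) = i ∧ T (r, c + 1) = j

open Finset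

theorem Finset.eq_Icc_one_card_of_Icc_one_subset {A : Finset ℕ} (h0 : 0 ∉ A)
    (hA : ∀ w ∈ A, Icc 1 w ⊆ A) : A = Icc 1 #A := by
  refine eq_of_subset_of_card_le (fun w hw => mem_Icc.2 ⟨?_, ?_⟩) (by simp)
  · exact Nat.one_le_iff_ne_zero.2 fun h => h0 (h ▸ hw)
  · simpa using card_le_card (hA w hw)

namespace YoungDiagram

theorem card_biUnion_col (μ : YoungDiagram) (s : ℕ) :
    #((range s).biUnion μ.col) = ∑ t ∈ range s, μ.colLen t := by
  rw [card_biUnion]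
  · exact sum_congr rfl fun t _ => (μ.colLen_eq_card).symm
  · intro t _ t' _ htt'
    simp only [Function.onFun, disjoint_left, mem_col_iff]
    rintro c ⟨-, rfl⟩ ⟨-, rfl⟩
    exact htt' rfl

theorem mem_biUnion_col {μ : YoungDiagram} {s : ℕ} {p : ℕ × ℕ} :
    p ∈ (range s).biUnion μ.col ↔ p ∈ μ ∧ p.2 < s := by
  simp only [mem_biUnion, mem_range, mem_col_iff]
  exact ⟨fun ⟨_, ht, hp, rfl⟩ => ⟨hp, ht⟩, fun ⟨hp, hs⟩ => ⟨_, hs, hp, rfl⟩⟩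

end YoungDiagram

namespace IsFilling

variable {μ : YoungDiagram} {T : ℕ × ℕ → ℕ}

theorem one_le (hT : IsFilling μ T) {p : ℕ × ℕ} (hp : p ∈ μ) : 1 ≤ T p :=
  (hT.mapsTo (μ.mem_cells p |>.2 hp)).1

theorem snd_eq_zero_of_le_colLen (hT : IsFilling μ T)
    (hcol₀ : ∀ v ∈ Icc 1 (μ.colLen 0), ∃ r, (r, 0) ∈ μ ∧ T (r, 0) = v)
    {p : ℕ × ℕ} (hp : p ∈ μ) (hle : T p ≤ μ.colLen 0) : p.2 = 0 := by
  obtain ⟨r, hr, hrp⟩ := hcol₀ (T p) (mem_Icc.2 ⟨hT.one_le hp, hle⟩)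
  rw [← hT.injOn (μ.mem_cells _ |>.2 hr) (μ.mem_cells _ |>.2 hp) hrp]

theorem snd_le_snd_of_lt (hT : IsFilling μ T)
    (hcol₀_le : ∀ r, (r, 0) ∈ μ → T (r, 0) ≤ μ.colLen 0)
    (hcol₀ : ∀ v ∈ Icc 1 (μ.colLen 0), ∃ r, (r, 0) ∈ μ ∧ T (r, 0) = v)
    (hadj : ∀ i₁ j₁ i₂ j₂, Adjacent μ T i₁ j₁ → Adjacent μ T i₂ j₂ → j₁ < j₂ → i₁ < i₂)
    {p q : ℕ × ℕ} (hp : p ∈ μ) (hq : q ∈ μ) (hlt : T p < T q) : p.2 ≤ q.2 := by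
  obtain ⟨i, d⟩ := p
  obtain ⟨j, c⟩ := q
  induction c generalizing i j d with
  | zero => exact (hT.snd_eq_zero_of_le_colLen hcol₀ hp (hlt.le.trans (hcol₀_le j hq))).le
  | succ c ih =>
    cases d with
    | zero => exact Nat.zero_le _
    | succ d =>
      have hp' : (i, d) ∈ μ := μ.up_left_mem le_rfl d.le_succ hp
      have hq' : (j, c) ∈ μ := μ.up_left_mem le_rfl c.le_succ hq
      have hleft : T (i, d) < T (j, c) :=
        hadj _ _ _ _ ⟨i, d, hp', hp, rfl, rfl⟩ ⟨j, c, hq', hq, rfl, rfl⟩ hlt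
      exact Nat.succ_le_succ (ih i d hp' j hq' hleft)

theorem image_biUnion_col_eq_Icc (hT : IsFilling μ T)
    (hmono : ∀ p ∈ μ, ∀ q ∈ μ, T p < T q → p.2 ≤ q.2) (s : ℕ) :
    ((range s).biUnion μ.col).image T = Icc 1 (∑ t ∈ range s, μ.colLen t) := by
  have hinj : Set.InjOn T ((range s).biUnion μ.col : Set (ℕ × ℕ)) :=
    hT.injOn.mono fun p hp => (μ.mem_cells p).2 (μ.mem_biUnion_col.1 hp).1
  rw [← μ.card_biUnion_col, ← card_image_of_injOn hinj]
  refine eq_Icc_one_card_of_Icc_one_subset ?_ ?_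
  · simp only [mem_image, μ.mem_biUnion_col, not_exists, not_and]
    exact fun p ⟨hp, _⟩ h0 => by have := hT.one_le hp; omega
  · simp only [subset_iff, mem_image, μ.mem_biUnion_col, mem_Icc, forall_exists_index, and_imp]
    rintro _ q hq hqs rfl v hv1 hvq
    obtain ⟨p, hp, rfl⟩ := hT.surjOn ⟨hv1, hvq.trans (hT.mapsTo ((μ.mem_cells q).2 hq)).2⟩
    rw [mem_coe, μ.mem_cells] at hp
    rcases hvq.lt_or_eq with hlt | heq
    · exact ⟨p, ⟨hp, (hmono p hp q hq hlt).trans_lt hqs⟩, rfl⟩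
    · exact ⟨q, ⟨hq, hqs⟩, heq.symm⟩

theorem le_sum_colLen_iff (hT : IsFilling μ T)
    (hmono : ∀ p ∈ μ, ∀ q ∈ μ, T p < T q → p.2 ≤ q.2) {p : ℕ × ℕ} (hp : p ∈ μ) (s : ℕ) :
    T p ≤ ∑ t ∈ range s, μ.colLen t ↔ p.2 < s := by
  have h := hT.image_biUnion_col_eq_Icc hmono s
  constructor
  · intro hle
    obtain ⟨q, hq, hqp⟩ := mem_image.1 (h ▸ mem_Icc.2 ⟨hT.one_le hp, hle⟩)
    obtain ⟨hqμ, hqs⟩ := μ.mem_biUnion_col.1 hq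
    rwa [← hT.injOn ((μ.mem_cells q).2 hqμ) ((μ.mem_cells p).2 hp) hqp]
  · intro hps
    exact (mem_Icc.1 (h ▸ mem_image_of_mem T (μ.mem_biUnion_col.2 ⟨hp, hps⟩))).2

theorem mem_Ioc_sum_colLen_iff (hT : IsFilling μ T)
    (hmono : ∀ p ∈ μ, ∀ q ∈ μ, T p < T q → p.2 ≤ q.2) {p : ℕ × ℕ} (hp : p ∈ μ) (s : ℕ) :
    T p ∈ Ioc (∑ t ∈ range s, μ.colLen t) (∑ t ∈ range (s + 1), μ.colLen t) ↔ p.2 = s := by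
  rw [mem_Ioc, ← not_le, hT.le_sum_colLen_iff hmono hp, hT.le_sum_colLen_iff hmono hp]
  omega

end IsFilling

/-- if a filling `T` of `μ` satisfies (a) its first column is filled with
`{1, ..., μ₁}` and (b) for adjacent pairs `(i₁,j₁)`, `(i₂,j₂)` one has `i₁ < i₂ ↔ j₁ < j₂`,
then for each column `s`, the `s`-th column of `T` contains precisely the integers from
`μ₁ + ⋯ + μ_{s-1} + 1` to `μ₁ + ⋯ + μ_s` (where `μ_t` are the column lengths of `μ`). -/
theorem stmt4 (μ : YoungDiagram) (T : ℕ × ℕ → ℕ) (hT : IsFilling μ T)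
    (ha : (∀ r, (r, 0) ∈ μ → T (r, 0) ∈ Finset.Icc 1 (μ.colLen 0)) ∧
      ∀ v ∈ Finset.Icc 1 (μ.colLen 0), ∃ r, (r, 0) ∈ μ ∧ T (r, 0) = v)
    (hb : ∀ i₁ j₁ i₂ j₂, Adjacent μ T i₁ j₁ → Adjacent μ T i₂ j₂ → (i₁ < i₂ ↔ j₁ < j₂)) :
    (∀ r s, (r, s) ∈ μ →
        T (r, s) ∈ Finset.Ioc (∑ t ∈ Finset.range s, μ.colLen t)
          (∑ t ∈ Finset.range (s + 1), μ.colLen t)) ∧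
      ∀ s v, v ∈ Finset.Ioc (∑ t ∈ Finset.range s, μ.colLen t)
          (∑ t ∈ Finset.range (s + 1), μ.colLen t) →
        ∃ r, (r, s) ∈ μ ∧ T (r, s) = v := by
  obtain ⟨ha₁, ha₂⟩ := ha
  have hmono : ∀ p ∈ μ, ∀ q ∈ μ, T p < T q → p.2 ≤ q.2 := fun p hp q hq =>
    hT.snd_le_snd_of_lt (fun r hr => (mem_Icc.1 (ha₁ r hr)).2) ha₂
      (fun _ _ _ _ h₁ h₂ => (hb _ _ _ _ h₁ h₂).2) hp hq
  refine ⟨fun r s hrs => (hT.mem_Ioc_sum_colLen_iff hmono hrs s).2 rfl, fun s v hv => ?_⟩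
  have hv' : v ∈ Icc 1 (∑ t ∈ range (s + 1), μ.colLen t) :=
    mem_Icc.2 ⟨Nat.one_le_of_lt (mem_Ioc.1 hv).1, (mem_Ioc.1 hv).2⟩
  rw [← hT.image_biUnion_col_eq_Icc hmono, mem_image] at hv'
  obtain ⟨⟨r, c⟩, hcols, rfl⟩ := hv'
  have hrc : (r, c) ∈ μ := (μ.mem_biUnion_col.1 hcols).1
  obtain rfl : c = s := (hT.mem_Ioc_sum_colLen_iff hmono hrc s).1 hv
  exact ⟨r, hrc, rfl⟩
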